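/- arXiv:2009.08540 — 2 statements merged into one kernel-verified Lean document; each statement's English description precedes it below -/
import Mathlib

section
/- Let λ : H → k be a partial action of a finite-dimensional Hopf algebra H on k. Suppose x ∈ H is a non-trivial (g,h)-primitive element (i.e. Δ(x) = x ⊗ g + h ⊗ x and x ∉ k·(g − h)) with λ(g) = 0 and λ(h) = 1. Then λ(x₁)x₂ ≠ λ(x₁)x₂λ(x₃); consequently H_λ is not a Hopf subalgebra of H. -/
open TensorProduct Coalgebra HopfAlgebra

variable (k : Type*) [Field k]

/-- The convolution-type expression `h ↦ l(h₁) m(h₂)` (Sweedler notation). -/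
noncomputable def pconv {H : Type*} [Ring H] [Bialgebra k H] (l m : H →ₗ[k] k) : H →ₗ[k] k :=
  (TensorProduct.lid k k).toLinearMap ∘ₗ TensorProduct.map l m ∘ₗ comul

/-- A partial action of the Hopf (bi)algebra `H` on its base field `k`:
`l 1 = 1` and `l h * l v = l h₁ * l (h₂ * v)` for all `h v`. -/
def IsPartialAction {H : Type*} [Ring H] [Bialgebra k H] (l : H →ₗ[k] k) : Prop :=
  l 1 = 1 ∧ ∀ h v : H, l h * l v = pconv k l (l ∘ₗ LinearMap.mulRight k v) h

/-- The map `h ↦ l(h₁) h₂` (Sweedler notation). -/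
noncomputable def lamL {H : Type*} [Ring H] [Bialgebra k H] (l : H →ₗ[k] k) : H →ₗ[k] H :=
  (TensorProduct.lid k H).toLinearMap ∘ₗ TensorProduct.map l LinearMap.id ∘ₗ comul

/-- The map `h ↦ h₁ l(h₂)` (Sweedler notation); note `lamL l (lamR l h) = l(h₁) h₂ l(h₃)`. -/
noncomputable def lamR {H : Type*} [Ring H] [Bialgebra k H] (l : H →ₗ[k] k) : H →ₗ[k] H :=
  (TensorProduct.rid k H).toLinearMap ∘ₗ TensorProduct.map LinearMap.id l ∘ₗ comul

/-- A group-like element: nonzero with `Δ g = g ⊗ g`. -/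
def IsGroupLikeElem' {H : Type*} [Ring H] [Bialgebra k H] (g : H) : Prop :=
  g ≠ 0 ∧ comul (R := k) g = g ⊗ₜ[k] g

/-!
With `l h = 1` and `l g = 0` one computes `l(x₁)x₂ = l(x) g + x` and `l(x₁)x₂l(x₃) = l(x) h`, so
their equality would put `x` in `k (g - h)`.

For the second claim: taking `v = 1` in the partial-action identity gives `l * l = l`, hence the
counit agrees with `l` on `H_l`, and `g ∉ H_l` because `ε g = 1 ≠ 0 = l g`. If `H_l` were a
subcoalgebra, a functional `φ` vanishing on `H_l` with `φ g = 1`, applied to the right tensor leg of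
`Δ(l(x) g + x) = l(x) g ⊗ g + x ⊗ g + h ⊗ x`, would give `x ∈ k g + k h`; then `ε x = 0` again
forces `x ∈ k (g - h)`.
-/

theorem TensorProduct.lTensor_eq_zero_of_mem_range_map_subtype {R M N P : Type*} [CommSemiring R]
    [AddCommMonoid M] [AddCommMonoid N] [AddCommMonoid P] [Module R M] [Module R N] [Module R P]
    {p : Submodule R M} {q : Submodule R N} {φ : N →ₗ[R] P} (hφ : φ ∘ₗ q.subtype = 0)
    {t : M ⊗[R] N} (ht : t ∈ LinearMap.range (map p.subtype q.subtype)) :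
    φ.lTensor M t = 0 := by
  obtain ⟨s, rfl⟩ := ht
  rw [LinearMap.lTensor_map, hφ, map_zero_right, LinearMap.zero_apply]

section Coalgebra

variable {k} {C : Type*} [AddCommGroup C] [Module k C] [Coalgebra k C]

theorem counit_eq_zero_of_comul_eq {x g h : C} (hg : g ≠ 0) (hh : counit (R := k) h = 1)
    (hx : comul (R := k) x = x ⊗ₜ[k] g + h ⊗ₜ[k] x) : counit (R := k) x = 0 := by
  have h := Coalgebra.rTensor_counit_comul (R := k) x
  rw [hx, map_add, LinearMap.rTensor_tmul, LinearMap.rTensor_tmul, hh, add_eq_right] at h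
  simpa [hg] using congrArg (TensorProduct.lid k C) h

theorem mem_span_sub_of_eq_smul_add_smul {x g h : C} (hg : counit (R := k) g = 1)
    (hh : counit (R := k) h = 1) (hx : counit (R := k) x = 0) {a b : k}
    (hab : x = a • g + b • h) : x ∈ Submodule.span k {g - h} := by
  have hb : b = -a := by
    have := congrArg (counit (R := k)) hab
    simp only [map_add, map_smul, hg, hh, hx, smul_eq_mul, mul_one] at this
    linear_combination -this
  rw [Submodule.mem_span_singleton]
  exact ⟨a, by rw [hab, hb]; module⟩

end Coalgebra

section Bialgebra

variable {k} {H : Type*} [Ring H] [Bialgebra k H]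

theorem IsGroupLikeElem'.isGroupLikeElem {g : H} (hg : IsGroupLikeElem' k g) :
    IsGroupLikeElem k g := by
  refine ⟨?_, hg.2⟩
  have h := Coalgebra.rTensor_counit_comul (R := k) g
  rw [hg.2, LinearMap.rTensor_tmul] at h
  have : (counit (R := k) g - 1) • g = 0 := by
    simpa [sub_smul, sub_eq_zero] using congrArg (TensorProduct.lid k H) h
  exact sub_eq_zero.mp ((smul_eq_zero.mp this).resolve_right hg.1)

variable {l : H →ₗ[k] k}

theorem apply_lamL (u : H) : l (lamL k l u) = pconv k l l u := by
  have h : l ∘ₗ (TensorProduct.lid k H).toLinearMap ∘ₗ map l LinearMap.id =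
      (TensorProduct.lid k k).toLinearMap ∘ₗ map l l := by
    ext a b
    simp
  exact LinearMap.congr_fun h (comul u)

theorem counit_lamL (u : H) : counit (R := k) (lamL k l u) = l u := by
  have h : counit ∘ₗ (TensorProduct.lid k H).toLinearMap ∘ₗ map l LinearMap.id =
      l ∘ₗ (TensorProduct.rid k H).toLinearMap ∘ₗ (counit (R := k) (A := H)).lTensor H := by
    ext a b
    simp [mul_comm]
  simpa [lamL] using LinearMap.congr_fun h (comul u)

theorem IsPartialAction.pconv_self (hl : IsPartialAction k l) : pconv k l l = l := by
  ext u
  simpa [hl.1] using (hl.2 u 1).symm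

theorem IsPartialAction.counit_eq_of_mem_range_lamL (hl : IsPartialAction k l) {a : H}
    (ha : a ∈ LinearMap.range (lamL k l)) : counit (R := k) a = l a := by
  obtain ⟨u, rfl⟩ := ha
  rw [counit_lamL, apply_lamL, hl.pconv_self]

theorem lamL_eq_of_comul_eq_tmul_self {g : H} (hg : comul (R := k) g = g ⊗ₜ[k] g) :
    lamL k l g = l g • g := by
  simp [lamL, hg]

theorem lamL_eq_of_comul_eq {x g h : H} (hx : comul (R := k) x = x ⊗ₜ[k] g + h ⊗ₜ[k] x) :
    lamL k l x = l x • g + l h • x := by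
  simp [lamL, hx]

theorem lamR_eq_of_comul_eq {x g h : H} (hx : comul (R := k) x = x ⊗ₜ[k] g + h ⊗ₜ[k] x) :
    lamR k l x = l g • x + l x • h := by
  simp [lamR, hx]

end Bialgebra

theorem range_lamL_not_hopfSubalgebra {H : Type*} [Ring H] [HopfAlgebra k H]
    {l : H →ₗ[k] k} (hpa : IsPartialAction k l) {g h x : H}
    (hg : IsGroupLikeElem' k g) (hh : IsGroupLikeElem' k h)
    (hx : comul (R := k) x = x ⊗ₜ[k] g + h ⊗ₜ[k] x)
    (hxnt : x ∉ Submodule.span k ({g - h} : Set H))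
    (hg0 : l g = 0) (hh1 : l h = 1) :
    lamL k l x ≠ lamL k l (lamR k l x) ∧
    ¬ ((∀ a ∈ LinearMap.range (lamL k l),
          comul (R := k) a ∈ LinearMap.range
            (TensorProduct.map (LinearMap.range (lamL k l)).subtype
              (LinearMap.range (lamL k l)).subtype)) ∧
        (∀ a ∈ LinearMap.range (lamL k l),
          antipode (R := k) a ∈ LinearMap.range (lamL k l))) := by
  have hεg := hg.isGroupLikeElem.counit_eq_one
  have hεh := hh.isGroupLikeElem.counit_eq_one
  have hεx := counit_eq_zero_of_comul_eq hg.1 hεh hx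
  have hlamL_x : lamL k l x = l x • g + x := by rw [lamL_eq_of_comul_eq hx, hh1, one_smul]
  refine ⟨fun heq => hxnt ?_, fun hHopf => hxnt ?_⟩
  · rw [lamR_eq_of_comul_eq hx, hg0, zero_smul, zero_add, map_smul,
      lamL_eq_of_comul_eq_tmul_self hh.2, hh1, one_smul, hlamL_x] at heq
    exact mem_span_sub_of_eq_smul_add_smul hεg hεh hεx (a := -l x) (b := l x)
      (by linear_combination (norm := module) heq)
  · have hgR : g ∉ LinearMap.range (lamL k l) := fun hmem => by
      simpa [hεg, hg0] using hpa.counit_eq_of_mem_range_lamL hmem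
    obtain ⟨φ, hφR, hφg⟩ :=
      LinearMap.exists_extend_of_notMem (0 : LinearMap.range (lamL k l) →ₗ[k] k) hgR 1
    have hkill := congrArg (TensorProduct.rid k H)
      (TensorProduct.lTensor_eq_zero_of_mem_range_map_subtype hφR (hHopf.1 _ ⟨x, rfl⟩))
    rw [hlamL_x, map_add, map_smul, hg.2, hx] at hkill
    simp only [map_add, map_smul, LinearMap.lTensor_tmul, TensorProduct.rid_tmul, hφg,
      one_smul, map_zero] at hkill
    exact mem_span_sub_of_eq_smul_add_smul hεg hεh hεx (a := -l x) (b := -φ x)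
      (by linear_combination (norm := module) hkill)
end

section
/- Let G be a group and N a subgroup of G. Then the linear map λ_N : kG → k defined on the basis G by λ_N(g) = 1 if g ∈ N and λ_N(g) = 0 otherwise is a partial action of the group Hopf algebra kG on k. Conversely, every partial action λ of kG on k is of this form: N = {g ∈ G | λ(g) = 1} is a subgroup and λ = λ_N. -/
open TensorProduct Coalgebra HopfAlgebra

variable (k : Type*) [Field k]

/-!
On group-like elements the partial action identity reads `λ(g) λ(v) = λ(g) λ(g v)`, and both of
its sides are bilinear in `(h, v)`, so `λ` is a partial action exactly when `f g = λ(g)` satisfies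
`f 1 = 1` and `f g * f g' = f g * f (g * g')` on the basis `G`. Evaluating at `(g, g⁻¹)` and
`(g⁻¹, g)` gives `f g⁻¹ = f g`, hence `f g * f g = f g * f g⁻¹ = f g`, so `f` is `{0, 1}`-valued;
its support is closed under products and inverses, i.e. `f` is the indicator of a subgroup.
-/

section Bialgebra

variable {k} {H ι : Type*} [Ring H] [Bialgebra k H]

theorem pconv_apply_of_comul_eq {l m : H →ₗ[k] k} {g : H}
    (hg : comul (R := k) g = g ⊗ₜ[k] g) : pconv k l m g = l g * m g := by
  simp [pconv, hg]

theorem isPartialAction_iff_of_basis (B : Module.Basis ι k H)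
    (hB : ∀ i, comul (R := k) (B i) = B i ⊗ₜ[k] B i) {l : H →ₗ[k] k} :
    IsPartialAction k l ↔ l 1 = 1 ∧ ∀ i j, l (B i) * l (B j) = l (B i) * l (B i * B j) := by
  refine ⟨fun hl => ⟨hl.1, fun i j => ?_⟩, fun ⟨h1, hmul⟩ => ⟨h1, fun h v => ?_⟩⟩
  · simpa [pconv_apply_of_comul_eq (hB i)] using hl.2 (B i) (B j)
  have hv : ∀ i, l (B i) * l v = l (B i) * l (B i * v) := fun i => by
    have := LinearMap.congr_fun (B.ext (f₁ := l (B i) • l)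
      (f₂ := l (B i) • (l ∘ₗ LinearMap.mulLeft k (B i))) fun j => by simpa using hmul i j) v
    simpa using this
  have := LinearMap.congr_fun (B.ext (f₁ := l v • l)
    (f₂ := pconv k l (l ∘ₗ LinearMap.mulRight k v)) fun i => by
      simpa [pconv_apply_of_comul_eq (hB i), mul_comm] using hv i) h
  simpa [mul_comm] using this

theorem Module.Basis.apply_one_eq_one {R M A : Type*} [CommSemiring R] [Monoid M] [Semiring A]
    [Algebra R A] (B : Module.Basis M R A) (hB : ∀ m n, B (m * n) = B m * B n) : B 1 = 1 := by
  have hB1 : LinearMap.mulLeft R (B 1) = LinearMap.id := B.ext fun m => by simp [← hB]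
  simpa using LinearMap.congr_fun hB1 1

def IsPartialCharacter {G R : Type*} [Monoid G] [Monoid R] (f : G → R) : Prop :=
  f 1 = 1 ∧ ∀ g g', f g * f g' = f g * f (g * g')

namespace IsPartialCharacter

variable {G R : Type*} [Group G]

theorem apply_inv [CommMonoid R] {f : G → R} (hf : IsPartialCharacter f) (g : G) :
    f g⁻¹ = f g := by
  have h := hf.2 g g⁻¹
  have h' := hf.2 g⁻¹ g
  rw [mul_inv_cancel, hf.1, mul_one] at h
  rw [inv_mul_cancel, hf.1, mul_one] at h'
  rw [← h', mul_comm, h]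

theorem isIdempotentElem [CommMonoid R] {f : G → R} (hf : IsPartialCharacter f) (g : G) :
    IsIdempotentElem (f g) := by
  calc f g * f g = f g * f g⁻¹ := by rw [hf.apply_inv]
    _ = f g := by rw [hf.2, mul_inv_cancel, hf.1, mul_one]

def toSubgroup [Monoid R] {f : G → R} (hf : IsPartialCharacter f) : Subgroup G where
  carrier := {g | f g = 1}
  one_mem' := hf.1
  mul_mem' {g g'} (hg : f g = 1) (hg' : f g' = 1) := by
    simpa [hg, hg'] using (hf.2 g g').symm
  inv_mem' {g} (hg : f g = 1) := by
    simpa [hg, hf.1] using hf.2 g g⁻¹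

theorem eq_indicator [CommMonoidWithZero R] [IsLeftCancelMulZero R] {f : G → R}
    (hf : IsPartialCharacter f) [DecidablePred (· ∈ hf.toSubgroup)] :
    f = fun g => if g ∈ hf.toSubgroup then 1 else 0 := by
  funext g
  by_cases hg : g ∈ hf.toSubgroup
  · rw [if_pos hg]
    exact hg
  · rw [if_neg hg]
    exact (IsIdempotentElem.iff_eq_zero_or_one.mp (hf.isIdempotentElem g)).resolve_right hg

end IsPartialCharacter

theorem isPartialCharacter_indicator {G R : Type*} [Group G] [MonoidWithZero R] (N : Subgroup G)
    [DecidablePred (· ∈ N)] : IsPartialCharacter fun g => if g ∈ N then (1 : R) else 0 := by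
  refine ⟨by simp [N.one_mem], fun g g' => ?_⟩
  by_cases hg : g ∈ N <;> simp [hg, N.mul_mem_cancel_left]

theorem isPartialAction_iff_isPartialCharacter {G A : Type*} [Group G] [Ring A] [Bialgebra k A]
    (B : Module.Basis G k A) (hBmul : ∀ g h : G, B (g * h) = B g * B h)
    (hBc : ∀ g : G, comul (R := k) (B g) = B g ⊗ₜ[k] B g) {l : A →ₗ[k] k} :
    IsPartialAction k l ↔ IsPartialCharacter fun g => l (B g) := by
  simp [isPartialAction_iff_of_basis B hBc, IsPartialCharacter, B.apply_one_eq_one hBmul, hBmul]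

end Bialgebra

open scoped Classical in
theorem partialActions_groupAlgebra {G : Type*} [Group G] {A : Type*} [Ring A]
    [HopfAlgebra k A] (B : Module.Basis G k A)
    (hBmul : ∀ g h : G, B (g * h) = B g * B h)
    (hBc : ∀ g : G, comul (R := k) (B g) = B g ⊗ₜ[k] B g) :
    (∀ N : Subgroup G,
      IsPartialAction k (B.constr k fun g => if g ∈ N then (1 : k) else 0)) ∧
    (∀ l : A →ₗ[k] k, IsPartialAction k l →
      ∃ N : Subgroup G, ((N : Set G) = {g : G | l (B g) = 1}) ∧
        l = B.constr k fun g => if g ∈ N then (1 : k) else 0) := by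
  refine ⟨fun N => ?_, fun l hl => ?_⟩
  · rw [isPartialAction_iff_isPartialCharacter B hBmul hBc]
    simpa [B.constr_basis] using isPartialCharacter_indicator (R := k) N
  · have hf := (isPartialAction_iff_isPartialCharacter B hBmul hBc).mp hl
    refine ⟨hf.toSubgroup, rfl, B.ext fun g => ?_⟩
    rw [B.constr_basis]
    exact congr_fun hf.eq_indicator g
end
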